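/- arXiv:2008.00828 — 7 statements merged into one kernel-verified Lean document; each statement's English description precedes it below -/
import Mathlib

section
/- Let T be the 3×3 real matrix with first row (0, β_I N, β_A N) and all other entries zero, and let Σ be the 3×3 real matrix with rows (−(k+μ), 0, 0), (k(1−q), −(γ_I+μ), 0), (kq, 0, −(γ_A+μ)). Then the matrix K = −T Σ⁻¹ has characteristic polynomial λ²(λ − R₀); equivalently, the eigenvalues of K are 0 (with algebraic multiplicity 2) and R₀ = β_I N k(1−q)/((k+μ)(γ_I+μ)) + β_A N k q/((k+μ)(γ_A+μ)). In particular R₀ is the dominant (largest-modulus) eigenvalue of the next-generation matrix K. -/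
/-!
Since `T` has a single nonzero row, so does `K = -T Σ⁻¹`. A matrix supported on its first row
is upper triangular with diagonal `(K₀₀, 0, …, 0)`, hence has characteristic polynomial
`Xⁿ (X - K₀₀)` and spectrum `{0, K₀₀}`. Inverting the lower triangular `Σ` explicitly gives
`K₀₀ = R₀`, which is nonnegative.
-/

open Matrix Polynomial

namespace Matrix

variable {R : Type*} [CommRing R] {n : ℕ}

theorem charpoly_eq_X_pow_mul_of_row_eq_zero (M : Matrix (Fin (n + 1)) (Fin (n + 1)) R)
    (hM : ∀ i ≠ 0, ∀ j, M i j = 0) : M.charpoly = X ^ n * (X - C (M 0 0)) := by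
  have hupper : M.IsUpperTriangular := fun i j hij => hM i (Fin.ne_zero_of_lt hij) j
  rw [charpoly_of_isUpperTriangular M hupper, Fin.prod_univ_succ]
  simp [hM _ (Fin.succ_ne_zero _), mul_comm]

theorem mem_spectrum_of_row_eq_zero [Nontrivial R] (M : Matrix (Fin (n + 1)) (Fin (n + 1)) R)
    (hM : ∀ i ≠ 0, ∀ j, M i j = 0) : M 0 0 ∈ spectrum R M :=
  mem_spectrum_of_isRoot_charpoly <| by simp [charpoly_eq_X_pow_mul_of_row_eq_zero M hM]

theorem spectrum_subset_of_row_eq_zero {K : Type*} [Field K]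
    (M : Matrix (Fin (n + 1)) (Fin (n + 1)) K) (hM : ∀ i ≠ 0, ∀ j, M i j = 0) :
    spectrum K M ⊆ {0, M 0 0} := by
  intro z hz
  rw [mem_spectrum_iff_isRoot_charpoly, charpoly_eq_X_pow_mul_of_row_eq_zero M hM] at hz
  simp only [IsRoot.def, eval_mul, eval_pow, eval_X, eval_sub, eval_C, mul_eq_zero,
    sub_eq_zero] at hz
  exact hz.imp_left eq_zero_of_pow_eq_zero

theorem inv_fin_three_lowerTriangular {K : Type*} [Field K] {a b c d e : K}
    (ha : a ≠ 0) (hc : c ≠ 0) (he : e ≠ 0) :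
    (!![a, 0, 0; b, c, 0; d, 0, e])⁻¹ =
      !![a⁻¹, 0, 0; -b / (a * c), c⁻¹, 0; -d / (a * e), 0, e⁻¹] := by
  refine inv_eq_right_inv ?_
  ext i j
  fin_cases i <;> fin_cases j <;> simp <;> field_simp <;> ring

end Matrix

theorem seiar_next_generation_matrix_eq {N μ βI βA k γI γA q : ℝ}
    (hkμ : k + μ ≠ 0) (hγIμ : γI + μ ≠ 0) (hγAμ : γA + μ ≠ 0) :
    -(!![0, βI * N, βA * N; 0, 0, 0; 0, 0, 0] *
        (!![-(k + μ), 0, 0; k * (1 - q), -(γI + μ), 0; k * q, 0, -(γA + μ)])⁻¹) =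
      !![βI * N * k * (1 - q) / ((k + μ) * (γI + μ)) + βA * N * k * q / ((k + μ) * (γA + μ)),
          βI * N / (γI + μ), βA * N / (γA + μ); 0, 0, 0; 0, 0, 0] := by
  rw [inv_fin_three_lowerTriangular (neg_ne_zero.2 hkμ) (neg_ne_zero.2 hγIμ)
    (neg_ne_zero.2 hγAμ)]
  ext i j
  fin_cases i <;> fin_cases j <;> simp [-neg_add_rev, div_eq_mul_inv]
  field_simp
  ring

/-- The next-generation matrix `K = -T * Σ⁻¹` of the linearised infection subsystem of the
SEIAR model has characteristic polynomial `λ² (λ - R₀)`, so its eigenvalues are `0` (with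
algebraic multiplicity 2) and `R₀`; in particular `R₀` is the dominant eigenvalue of `K`. -/
theorem seiar_next_generation_matrix_charpoly
    (N μ βI βA k γI γA q : ℝ)
    (hN : 0 < N) (hμ : 0 < μ) (hβI : 0 < βI) (hβA : 0 < βA)
    (hk : 0 < k) (hγI : 0 < γI) (hγA : 0 < γA)
    (hq0 : 0 ≤ q) (hq1 : q ≤ 1)
    (T Sig K : Matrix (Fin 3) (Fin 3) ℝ) (R₀ : ℝ)
    (hT : T = !![0, βI * N, βA * N; 0, 0, 0; 0, 0, 0])
    (hSig : Sig = !![-(k + μ), 0, 0;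
                     k * (1 - q), -(γI + μ), 0;
                     k * q, 0, -(γA + μ)])
    (hK : K = -(T * Sig⁻¹))
    (hR₀ : R₀ = βI * N * k * (1 - q) / ((k + μ) * (γI + μ))
              + βA * N * k * q / ((k + μ) * (γA + μ))) :
    K.charpoly = X ^ 2 * (X - C R₀) ∧
      R₀ ∈ spectrum ℝ K ∧
      ∀ z : ℂ, z ∈ spectrum ℂ (K.map Complex.ofReal) → ‖z‖ ≤ R₀ := by
  have hK_eq : K = !![R₀, βI * N / (γI + μ), βA * N / (γA + μ); 0, 0, 0; 0, 0, 0] := by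
    rw [hK, hT, hSig, hR₀]
    exact seiar_next_generation_matrix_eq (by positivity) (by positivity) (by positivity)
  have hK_row : ∀ i ≠ 0, ∀ j, K i j = 0 := by
    intro i hi j
    rw [hK_eq]
    fin_cases i <;> fin_cases j <;> simp at hi ⊢
  have hK₀₀ : K 0 0 = R₀ := by simp [hK_eq]
  have hR₀_nonneg : 0 ≤ R₀ := by
    have : 0 ≤ 1 - q := sub_nonneg.2 hq1
    rw [hR₀]
    positivity
  refine ⟨hK₀₀ ▸ charpoly_eq_X_pow_mul_of_row_eq_zero K hK_row,
    hK₀₀ ▸ mem_spectrum_of_row_eq_zero K hK_row, fun z hz => ?_⟩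
  have hKℂ_row : ∀ i ≠ 0, ∀ j, K.map Complex.ofReal i j = 0 := fun i hi j => by
    simp [hK_row i hi j]
  rcases spectrum_subset_of_row_eq_zero _ hKℂ_row hz with rfl | rfl
  · simpa using hR₀_nonneg
  · simp [hK₀₀, abs_of_nonneg hR₀_nonneg]
end

section
/- If differentiable functions S, E, I, A, R : [0,∞) → ℝ satisfy the SEIAR system S' = μN − β_I S I − β_A S A − μS, E' = β_I S I + β_A S A − (k+μ)E, I' = k(1−q)E − (γ_I+μ)I, A' = kqE − (γ_A+μ)A, R' = γ_I I + γ_A A − μR, with nonnegative initial data (S(0), E(0), I(0), A(0), R(0)) ∈ (ℝ₀⁺)⁵, then S(t), E(t), I(t), A(t), R(t) remain nonnegative for all t ≥ 0. -/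
/-!
Let `F` be the sum of the negative parts of the five compartments. On a compact interval
`[0, T]` the solution is bounded, so whenever a compartment is `≤ 0` its rate of decrease is at
most `K * F` for a constant `K` (the bilinear incidence terms are controlled through the bound).
Hence the upper right Dini derivative of `F` is at most `5 * K * F`, and since `F 0 = 0`,
Grönwall's inequality forces `F = 0` on `[0, T]`.
-/

open Set Filter Topology

def DiniUpperRightLE (f : ℝ → ℝ) (t d : ℝ) : Prop :=
  ∀ r, d < r → ∀ᶠ z in 𝓝[>] t, slope f t z < r

namespace DiniUpperRightLE

variable {t : ℝ}

theorem add {f g : ℝ → ℝ} {d e : ℝ} (hf : DiniUpperRightLE f t d)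
    (hg : DiniUpperRightLE g t e) : DiniUpperRightLE (f + g) t (d + e) := by
  intro r hr
  filter_upwards [hf (d + (r - d - e) / 2) (by linarith), hg (e + (r - d - e) / 2) (by linarith)]
    with z hfz hgz
  have : slope (f + g) t z = slope f t z + slope g t z := by
    simp only [slope_def_field, Pi.add_apply]; ring
  linarith

theorem finset_sum {ι : Type*} {f : ι → ℝ → ℝ} {d : ι → ℝ} (s : Finset ι)
    (h : ∀ i ∈ s, DiniUpperRightLE (f i) t (d i)) :
    DiniUpperRightLE (fun z => ∑ i ∈ s, f i z) t (∑ i ∈ s, d i) := by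
  classical
  induction s using Finset.induction_on with
  | empty =>
    intro r hr
    exact .of_forall fun z => by simpa [slope_def_field] using hr
  | insert i s hi ih =>
    simp only [Finset.sum_insert hi]
    exact (h i (Finset.mem_insert_self i s)).add
      (ih fun j hj => h j (Finset.mem_insert_of_mem hj))

end DiniUpperRightLE

theorem HasDerivWithinAt.diniUpperRightLE_negPart {x : ℝ → ℝ} {x' t d : ℝ}
    (hx : HasDerivWithinAt x x' (Ici t) t) (hd : 0 ≤ d) (hxd : x t ≤ 0 → -x' ≤ d) :
    DiniUpperRightLE (fun z => (x z)⁻) t d := by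
  intro r hr
  rcases lt_or_ge 0 (x t) with hpos | hnonpos
  · have hxpos : ∀ᶠ z in 𝓝[>] t, 0 < x z :=
      (hx.continuousWithinAt.mono Ioi_subset_Ici_self).eventually (eventually_gt_nhds hpos)
    filter_upwards [hxpos] with z hz
    rw [slope_def_field, negPart_eq_zero.2 hz.le, negPart_eq_zero.2 hpos.le, sub_self, zero_div]
    exact hd.trans_lt hr
  · have hslope : ∀ᶠ z in 𝓝[>] t, -r < slope x t z :=
      ((hasDerivWithinAt_iff_tendsto_slope' (lt_irrefl t)).1 hx.Ioi_of_Ici).eventually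
        (eventually_gt_nhds (by linarith [hxd hnonpos]))
    filter_upwards [hslope, self_mem_nhdsWithin] with z hz (hzt : t < z)
    rw [slope_def_field, lt_div_iff₀ (sub_pos.2 hzt)] at hz
    rw [slope_def_field, div_lt_iff₀ (sub_pos.2 hzt), negPart_eq_neg.2 hnonpos, negPart_def,
      sub_neg_eq_add, ← lt_sub_iff_add_lt, sup_lt_iff]
    have := mul_pos (hd.trans_lt hr) (sub_pos.2 hzt)
    constructor <;> linarith

theorem nonneg_of_neg_deriv_le_mul_sum_negPart {ι : Type*} [Fintype ι] {x x' : ℝ → ι → ℝ}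
    {a b K : ℝ} (hK : 0 ≤ K) (hcont : ∀ i, ContinuousOn (fun t => x t i) (Icc a b))
    (hderiv : ∀ i, ∀ t ∈ Ico a b, HasDerivWithinAt (fun t => x t i) (x' t i) (Ici t) t)
    (hquasi : ∀ t ∈ Ico a b, ∀ i, x t i ≤ 0 → -x' t i ≤ K * ∑ j, (x t j)⁻)
    (ha : ∀ i, 0 ≤ x a i) : ∀ t ∈ Icc a b, ∀ i, 0 ≤ x t i := by
  set F : ℝ → ℝ := fun t => ∑ j, (x t j)⁻
  have hFcont : ContinuousOn F (Icc a b) :=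
    continuousOn_finsetSum _ fun j _ => (hcont j).neg.sup continuousOn_const
  have hFdini : ∀ t ∈ Ico a b, DiniUpperRightLE F t (Fintype.card ι * K * F t) := by
    intro t ht
    have hKF : 0 ≤ K * F t := mul_nonneg hK (Finset.sum_nonneg fun j _ => negPart_nonneg _)
    have := DiniUpperRightLE.finset_sum Finset.univ fun j _ =>
      (hderiv j t ht).diniUpperRightLE_negPart hKF (hquasi t ht j)
    simpa [mul_assoc] using this
  have hFle : ∀ t ∈ Icc a b, F t ≤ 0 := by
    intro t ht
    have := le_gronwallBound_of_liminf_deriv_right_le hFcont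
      (fun s hs r hr => (hFdini s hs r hr).frequently) (δ := 0) (by simp [F, ha]) (ε := 0)
      (fun s _ => (add_zero _).ge) t ht
    rwa [gronwallBound_ε0_δ0] at this
  intro t ht i
  exact negPart_nonpos.1 <| (Finset.single_le_sum (fun j _ => negPart_nonneg (x t j))
    (Finset.mem_univ i)).trans (hFle t ht)

theorem neg_mul_le_mul_negPart_add_negPart {a b C : ℝ} (ha : |a| ≤ C) (hb : |b| ≤ C) :
    -(a * b) ≤ C * (a⁻ + b⁻) := by
  have hab : -(a * b) = a⁺ * b⁻ + a⁻ * b⁺ - a⁺ * b⁺ - a⁻ * b⁻ := by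
    conv_lhs => rw [← posPart_sub_negPart a, ← posPart_sub_negPart b]
    ring
  have ha' : a⁺ ≤ C := by linarith [posPart_add_negPart a, negPart_nonneg a]
  have hb' : b⁺ ≤ C := by linarith [posPart_add_negPart b, negPart_nonneg b]
  rw [hab]
  linarith [mul_le_mul_of_nonneg_right ha' (negPart_nonneg b),
    mul_le_mul_of_nonneg_right hb' (negPart_nonneg a),
    mul_nonneg (posPart_nonneg a) (posPart_nonneg b),
    mul_nonneg (negPart_nonneg a) (negPart_nonneg b)]

theorem mul_le_mul_negPart_of_nonpos {a b C : ℝ} (ha : a ≤ 0) (hb : |b| ≤ C) :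
    a * b ≤ C * a⁻ := by
  rw [negPart_eq_neg.2 ha]
  nlinarith [(abs_le.1 hb).1]

/-- Coordinates `x = (S, E, I, A, R)`. -/
def seiarField (N μ βI βA k γI γA q : ℝ) (x : Fin 5 → ℝ) : Fin 5 → ℝ :=
  ![μ * N - βI * x 0 * x 2 - βA * x 0 * x 3 - μ * x 0,
    βI * x 0 * x 2 + βA * x 0 * x 3 - (k + μ) * x 1,
    k * (1 - q) * x 1 - (γI + μ) * x 2,
    k * q * x 1 - (γA + μ) * x 3,
    γI * x 2 + γA * x 3 - μ * x 4]

theorem neg_seiarField_le {N μ βI βA k γI γA q C : ℝ} (hN : 0 ≤ N) (hμ : 0 ≤ μ) (hβI : 0 ≤ βI)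
    (hβA : 0 ≤ βA) (hk : 0 ≤ k) (hγI : 0 ≤ γI) (hγA : 0 ≤ γA) (hq0 : 0 ≤ q) (hq1 : q ≤ 1)
    {x : Fin 5 → ℝ} (hS : |x 0| ≤ C) (hI : |x 2| ≤ C) (hA : |x 3| ≤ C) (j : Fin 5)
    (hj : x j ≤ 0) :
    -seiarField N μ βI βA k γI γA q x j ≤ ((βI + βA) * C + k + γI + γA) * ∑ l, (x l)⁻ := by
  have hC : 0 ≤ C := (abs_nonneg _).trans hS
  have hx := fun l => negPart_nonneg (x l)
  have hle : ∀ {c y : ℝ}, c ≤ (βI + βA) * C + k + γI + γA → 0 ≤ y → y ≤ ∑ l, (x l)⁻ →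
      c * y ≤ ((βI + βA) * C + k + γI + γA) * ∑ l, (x l)⁻ :=
    fun hc hy hyP => mul_le_mul hc hyP hy (by positivity)
  rw [Fin.sum_univ_five] at hle ⊢
  fin_cases j <;>
    simp only [seiarField, Fin.zero_eta, Fin.mk_one, Fin.reduceFinMk, Fin.isValue,
      Matrix.cons_val] at hj ⊢
  · calc _ ≤ (βI + βA) * C * (x 0)⁻ := by
          linarith [mul_le_mul_of_nonneg_left (mul_le_mul_negPart_of_nonpos hj hI) hβI,
            mul_le_mul_of_nonneg_left (mul_le_mul_negPart_of_nonpos hj hA) hβA,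
            mul_nonneg hμ hN, mul_nonpos_of_nonneg_of_nonpos hμ hj]
      _ ≤ _ := hle (by linarith) (hx 0) (by linarith [hx 1, hx 2, hx 3, hx 4])
  · calc _ ≤ (βI + βA) * C * ((x 0)⁻ + (x 2)⁻ + (x 3)⁻) := by
          linarith [mul_le_mul_of_nonneg_left (neg_mul_le_mul_negPart_add_negPart hS hI) hβI,
            mul_le_mul_of_nonneg_left (neg_mul_le_mul_negPart_add_negPart hS hA) hβA,
            mul_nonpos_of_nonneg_of_nonpos (add_nonneg hk hμ) hj,
            mul_nonneg (mul_nonneg hβI hC) (hx 3),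
            mul_nonneg (mul_nonneg hβA hC) (hx 2)]
      _ ≤ _ := hle (by linarith) (by linarith [hx 0, hx 2, hx 3])
          (by linarith [hx 1, hx 4])
  · calc _ ≤ k * (x 1)⁻ := by
          linarith [mul_le_mul_of_nonneg_left (neg_le_negPart (x 1))
            (mul_nonneg hk (sub_nonneg.2 hq1)),
            mul_nonpos_of_nonneg_of_nonpos (add_nonneg hγI hμ) hj,
            mul_nonneg (mul_nonneg hk hq0) (hx 1)]
      _ ≤ _ := hle (by linarith [mul_nonneg (add_nonneg hβI hβA) hC]) (hx 1)
          (by linarith [hx 0, hx 2, hx 3, hx 4])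
  · calc _ ≤ k * (x 1)⁻ := by
          linarith [mul_le_mul_of_nonneg_left (neg_le_negPart (x 1)) (mul_nonneg hk hq0),
            mul_nonpos_of_nonneg_of_nonpos (add_nonneg hγA hμ) hj,
            mul_nonneg (mul_nonneg hk (sub_nonneg.2 hq1)) (hx 1)]
      _ ≤ _ := hle (by linarith [mul_nonneg (add_nonneg hβI hβA) hC]) (hx 1)
          (by linarith [hx 0, hx 2, hx 3, hx 4])
  · calc _ ≤ (γI + γA) * ((x 2)⁻ + (x 3)⁻) := by
          linarith [mul_le_mul_of_nonneg_left (neg_le_negPart (x 2)) hγI,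
            mul_le_mul_of_nonneg_left (neg_le_negPart (x 3)) hγA,
            mul_nonpos_of_nonneg_of_nonpos hμ hj, mul_nonneg hγI (hx 3), mul_nonneg hγA (hx 2)]
      _ ≤ _ := hle (by linarith [mul_nonneg (add_nonneg hβI hβA) hC])
          (by linarith [hx 2, hx 3]) (by linarith [hx 0, hx 1, hx 4])

/-- Solutions of the SEIAR system on `[0,∞)` with nonnegative initial data remain
nonnegative for all `t ≥ 0`. -/
theorem seiar_nonnegativity
    (N μ βI βA k γI γA q : ℝ)
    (hN : 0 < N) (hμ : 0 < μ) (hβI : 0 < βI) (hβA : 0 < βA)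
    (hk : 0 < k) (hγI : 0 < γI) (hγA : 0 < γA)
    (hq0 : 0 ≤ q) (hq1 : q ≤ 1)
    (S E I A R : ℝ → ℝ)
    (hS : ∀ t ∈ Set.Ici (0 : ℝ),
      HasDerivWithinAt S (μ * N - βI * S t * I t - βA * S t * A t - μ * S t) (Set.Ici 0) t)
    (hE : ∀ t ∈ Set.Ici (0 : ℝ),
      HasDerivWithinAt E (βI * S t * I t + βA * S t * A t - (k + μ) * E t) (Set.Ici 0) t)
    (hI : ∀ t ∈ Set.Ici (0 : ℝ),
      HasDerivWithinAt I (k * (1 - q) * E t - (γI + μ) * I t) (Set.Ici 0) t)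
    (hA : ∀ t ∈ Set.Ici (0 : ℝ),
      HasDerivWithinAt A (k * q * E t - (γA + μ) * A t) (Set.Ici 0) t)
    (hR : ∀ t ∈ Set.Ici (0 : ℝ),
      HasDerivWithinAt R (γI * I t + γA * A t - μ * R t) (Set.Ici 0) t)
    (hS0 : 0 ≤ S 0) (hE0 : 0 ≤ E 0) (hI0 : 0 ≤ I 0) (hA0 : 0 ≤ A 0) (hR0 : 0 ≤ R 0) :
    ∀ t ∈ Set.Ici (0 : ℝ), 0 ≤ S t ∧ 0 ≤ E t ∧ 0 ≤ I t ∧ 0 ≤ A t ∧ 0 ≤ R t := by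
  intro T hT
  set x : ℝ → Fin 5 → ℝ := fun t => ![S t, E t, I t, A t, R t]
  have hderiv : ∀ i, ∀ t ∈ Ici (0 : ℝ), HasDerivWithinAt (fun t => x t i)
      (seiarField N μ βI βA k γI γA q (x t) i) (Ici 0) t := by
    intro i t ht
    fin_cases i
    exacts [hS t ht, hE t ht, hI t ht, hA t ht, hR t ht]
  have hcont : ∀ i, ContinuousOn (fun t => x t i) (Icc 0 T) := fun i t ht =>
    (hderiv i t ht.1).continuousWithinAt.mono Icc_subset_Ici_self
  obtain ⟨C, hC⟩ := isCompact_Icc.exists_bound_of_continuousOn (continuousOn_pi.2 hcont)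
  have hxC : ∀ t ∈ Icc 0 T, ∀ i, |x t i| ≤ C := fun t ht i =>
    (norm_le_pi_norm (x t) i).trans (hC t ht)
  have hC0 : 0 ≤ C := (abs_nonneg _).trans (hxC 0 ⟨le_rfl, hT⟩ 0)
  have hx := nonneg_of_neg_deriv_le_mul_sum_negPart (by positivity) hcont
    (fun i t ht => (hderiv i t ht.1).mono (Ici_subset_Ici.2 ht.1))
    (fun t ht => neg_seiarField_le hN.le hμ.le hβI.le hβA.le hk.le hγI.le hγA.le hq0 hq1
      (hxC t (Ico_subset_Icc_self ht) 0) (hxC t (Ico_subset_Icc_self ht) 2)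
      (hxC t (Ico_subset_Icc_self ht) 3))
    (fun i => by fin_cases i <;> assumption) T ⟨hT, le_rfl⟩
  exact ⟨hx 0, hx 1, hx 2, hx 3, hx 4⟩
end

section
/- (Theorem 1, local stability of the disease-free steady state.) If R₀ < 1, then every eigenvalue of the Jacobian matrix of the SEIAR system evaluated at the disease-free steady state (N, 0, 0, 0, 0) has negative real part; in particular, every complex root of the cubic λ³ + (γ_I + γ_A + k + 3μ)λ² + [(k+μ)(γ_I+γ_A+2μ) + (γ_I+μ)(γ_A+μ) − Nk(β_I(1−q) + β_A q)]λ + (k+μ)(γ_I+μ)(γ_A+μ) − Nk(β_I(1−q)(γ_A+μ) + β_A q(γ_I+μ)) has negative real part. -/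
/-!
At the disease-free state the Jacobian is block triangular: the susceptible and recovered
directions contribute the eigenvalue `-μ` twice, and the infected compartments `(E, I, A)`
contribute the roots of `(λ + p)(λ + r)(λ + s) - u (λ + s) - v (λ + r)`, where
`p = k + μ`, `r = γ_I + μ`, `s = γ_A + μ`, `u = β_I N k (1 - q)`, `v = β_A N k q`.
Since `R₀ = u / (p r) + v / (p s)`, the condition `R₀ < 1` reads `u s + v r < p r s`, which gives
the Routh–Hurwitz conditions `a > 0`, `c > 0`, `a b > c` for this cubic written as
`λ³ + a λ² + b λ + c`.
-/

open Matrix Polynomial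

theorem Complex.re_neg_of_cubic_eq_zero {a b c : ℝ} (ha : 0 < a) (hc : 0 < c) (hab : c < a * b)
    {z : ℂ} (hz : z ^ 3 + a * z ^ 2 + b * z + c = 0) : z.re < 0 := by
  by_contra! hσ
  obtain ⟨σ, τ⟩ := z
  simp only at hσ
  have hre := congrArg Complex.re hz
  have him := congrArg Complex.im hz
  simp only [pow_succ, pow_zero, one_mul, Complex.add_re, Complex.add_im, Complex.mul_re,
    Complex.mul_im, Complex.ofReal_re, Complex.ofReal_im, Complex.zero_re, Complex.zero_im]
    at hre him
  have hb : 0 < b := pos_of_mul_pos_right (hc.trans hab) ha.le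
  rcases mul_eq_zero.mp (show τ * (3 * σ ^ 2 - τ ^ 2 + 2 * a * σ + b) = 0 by
    linear_combination him) with hτ | hτ
  · subst hτ
    nlinarith [pow_nonneg hσ 3, mul_nonneg ha.le (sq_nonneg σ), mul_nonneg hb.le hσ]
  · -- on a non-real root, `τ²` is determined by `σ`, and then `c - a b ≥ 0` when `σ ≥ 0`
    have hτsq : τ ^ 2 = 3 * σ ^ 2 + 2 * a * σ + b := by linear_combination -hτ
    have key : c - a * b = 8 * σ ^ 3 + 8 * a * σ ^ 2 + 2 * (a ^ 2 + b) * σ := by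
      linear_combination hre + (3 * σ + a) * hτsq
    nlinarith [pow_nonneg hσ 3, mul_nonneg ha.le (sq_nonneg σ),
      mul_nonneg (add_nonneg (sq_nonneg a) hb.le) hσ]

theorem re_neg_of_perturbed_cubic_eq_zero {p r s u v : ℝ} (hp : 0 < p) (hr : 0 < r)
    (hs : 0 < s) (hu : 0 ≤ u) (hv : 0 ≤ v) (h : u * s + v * r < p * r * s) {z : ℂ}
    (hz : (z + p) * (z + r) * (z + s) - u * (z + s) - v * (z + r) = 0) : z.re < 0 := by
  have hu' : u < p * r := lt_of_mul_lt_mul_right (by nlinarith [mul_nonneg hv hr.le]) hs.le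
  have hv' : v < p * s := lt_of_mul_lt_mul_right (by nlinarith [mul_nonneg hu hs.le]) hr.le
  refine Complex.re_neg_of_cubic_eq_zero (a := p + r + s) (b := p * (r + s) + r * s - (u + v))
    (c := p * r * s - (u * s + v * r)) (by positivity) (by linarith) ?_ ?_
  · -- `a b - c = (p + r)(p + s)(r + s) - u (p + r) - v (p + s)`
    nlinarith [mul_lt_mul_of_pos_right hu' (add_pos hp hr),
      mul_lt_mul_of_pos_right hv' (add_pos hp hs), mul_pos (mul_pos hp hr) hs,
      mul_pos (mul_pos hr hr) hs, mul_pos (mul_pos hr hs) hs]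
  · push_cast
    linear_combination hz

theorem fderiv_apply_apply_single {n : ℕ} (i j : Fin n) (x : Fin n → ℝ) :
    fderiv ℝ (fun y : Fin n → ℝ => y i) x (Pi.single j 1) = (Pi.single j 1 : Fin n → ℝ) i := by
  rw [(hasFDerivAt_apply i x).fderiv]
  rfl

namespace SEIAR

variable (N μ βI βA k γI γA q : ℝ)

/-- Coordinates are ordered `(S, E, I, A, R)`. -/
def vectorField (x : Fin 5 → ℝ) : Fin 5 → ℝ :=
  ![μ * N - βI * x 0 * x 2 - βA * x 0 * x 3 - μ * x 0,
    βI * x 0 * x 2 + βA * x 0 * x 3 - (k + μ) * x 1,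
    k * (1 - q) * x 1 - (γI + μ) * x 2,
    k * q * x 1 - (γA + μ) * x 3,
    γI * x 2 + γA * x 3 - μ * x 4]

def jacobianAtDFE : Matrix (Fin 5) (Fin 5) ℝ :=
  !![-μ, 0, -(βI * N), -(βA * N), 0;
     0, -(k + μ), βI * N, βA * N, 0;
     0, k * (1 - q), -(γI + μ), 0, 0;
     0, k * q, 0, -(γA + μ), 0;
     0, 0, γI, γA, -μ]

theorem fderiv_vectorField_single (i j : Fin 5) :
    fderiv ℝ (fun x => vectorField N μ βI βA k γI γA q x i) ![N, 0, 0, 0, 0] (Pi.single j 1) =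
      jacobianAtDFE N μ βI βA k γI γA q i j := by
  fin_cases i <;> fin_cases j <;>
    simp (disch := fun_prop) [vectorField, jacobianAtDFE, fderiv_fun_sub, fderiv_fun_add,
      fderiv_fun_mul, fderiv_apply_apply_single, Pi.single_apply]

theorem det_sub_jacobianAtDFE (z : ℂ) :
    det (algebraMap ℂ (Matrix (Fin 5) (Fin 5) ℂ) z -
        (jacobianAtDFE N μ βI βA k γI γA q).map Complex.ofReal) =
      (z + μ) ^ 2 * ((z + ↑(k + μ)) * (z + ↑(γI + μ)) * (z + ↑(γA + μ))
        - ↑(βI * N * k * (1 - q)) * (z + ↑(γA + μ)) - ↑(βA * N * k * q) * (z + ↑(γI + μ))) := by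
  simp [jacobianAtDFE, det_succ_column_zero, Fin.sum_univ_succ, algebraMap_matrix_apply,
    Fin.succAbove]
  ring

end SEIAR

/-- Local stability of the disease-free steady state: if `R₀ < 1`, every eigenvalue of the
Jacobian of the SEIAR system at `(N,0,0,0,0)` has negative real part; in particular every
complex root of the cubic factor of the characteristic polynomial has negative real part. -/
theorem seiar_dfe_locally_stable
    (N μ βI βA k γI γA q : ℝ)
    (hN : 0 < N) (hμ : 0 < μ) (hβI : 0 < βI) (hβA : 0 < βA)
    (hk : 0 < k) (hγI : 0 < γI) (hγA : 0 < γA)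
    (hq0 : 0 ≤ q) (hq1 : q ≤ 1)
    (R₀ : ℝ)
    (hR₀ : R₀ = βI * N * k * (1 - q) / ((k + μ) * (γI + μ))
              + βA * N * k * q / ((k + μ) * (γA + μ)))
    (hR₀lt : R₀ < 1)
    (F : (Fin 5 → ℝ) → Fin 5 → ℝ)
    (hF : F = fun x => ![μ * N - βI * x 0 * x 2 - βA * x 0 * x 3 - μ * x 0,
                         βI * x 0 * x 2 + βA * x 0 * x 3 - (k + μ) * x 1,
                         k * (1 - q) * x 1 - (γI + μ) * x 2,
                         k * q * x 1 - (γA + μ) * x 3,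
                         γI * x 2 + γA * x 3 - μ * x 4])
    (x₀ : Fin 5 → ℝ) (hx₀ : x₀ = ![N, 0, 0, 0, 0])
    (J : Matrix (Fin 5) (Fin 5) ℝ)
    (hJ : J = Matrix.of fun i j => fderiv ℝ (fun x => F x i) x₀ (Pi.single j 1)) :
    (∀ z : ℂ, z ∈ spectrum ℂ (J.map Complex.ofReal) → z.re < 0) ∧
    (∀ z : ℂ,
      z ^ 3 + ((γI + γA + k + 3 * μ : ℝ) : ℂ) * z ^ 2
        + (((k + μ) * (γI + γA + 2 * μ) + (γI + μ) * (γA + μ)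
            - N * k * (βI * (1 - q) + βA * q) : ℝ) : ℂ) * z
        + (((k + μ) * (γI + μ) * (γA + μ)
            - N * k * (βI * (1 - q) * (γA + μ) + βA * q * (γI + μ)) : ℝ) : ℂ) = 0 →
      z.re < 0) := by
  have hp : 0 < k + μ := by positivity
  have hr : 0 < γI + μ := by positivity
  have hs : 0 < γA + μ := by positivity
  have hR : βI * N * k * (1 - q) * (γA + μ) + βA * N * k * q * (γI + μ)
      < (k + μ) * (γI + μ) * (γA + μ) := by
    rw [hR₀, div_add_div _ _ (by positivity) (by positivity), div_lt_one (by positivity)]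
      at hR₀lt
    nlinarith [mul_pos hr hs]
  have hroot := fun z : ℂ => re_neg_of_perturbed_cubic_eq_zero (z := z) hp hr hs
    (mul_nonneg (by positivity) (sub_nonneg.mpr hq1)) (by positivity) hR
  have hJ' : J = SEIAR.jacobianAtDFE N μ βI βA k γI γA q := by
    subst hF hx₀ hJ
    ext i j
    exact SEIAR.fderiv_vectorField_single N μ βI βA k γI γA q i j
  refine ⟨fun z hz => ?_, fun z hz => hroot z (by push_cast at hz ⊢; linear_combination hz)⟩
  rw [hJ', spectrum.mem_iff, isUnit_iff_isUnit_det, isUnit_iff_ne_zero, not_not,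
    SEIAR.det_sub_jacobianAtDFE] at hz
  rcases mul_eq_zero.mp hz with hμz | hcubic
  · rw [eq_neg_of_add_eq_zero_left (pow_eq_zero_iff two_ne_zero |>.mp hμz)]
    simpa using hμ
  · exact hroot z hcubic
end

section
/- If R₀ > 1, then the point (S*, E*, I*, A*, R*) with S* = N/R₀, E* = (Nμ/(k+μ))(1 − 1/R₀), I* = (Nk(1−q)μ/((γ_I+μ)(k+μ)))(1 − 1/R₀), A* = (Nkqμ/((γ_A+μ)(k+μ)))(1 − 1/R₀), R* = (Nk(qγ_Aμ + γ_I(γ_A + μ − qμ))/((γ_I+μ)(γ_A+μ)(k+μ)))(1 − 1/R₀) is an equilibrium of the SEIAR system (all right-hand sides vanish at this point), all of whose components S*, E*, R* are positive, with I* positive when q < 1 and A* positive when q > 0. Moreover it is the unique equilibrium of the SEIAR system with E > 0. -/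
/-! Along an equilibrium the `I`- and `A`-equations express `I` and `A` as multiples of `E`,
and then the total infection rate `βI S I + βA S A` equals `(k + μ) R₀ S E / N`. So when
`E ≠ 0` the `E`-equation forces `S = N / R₀`, adding the `S`- and `E`-equations gives
`(k + μ) E = μ (N - S)`, and the remaining components follow linearly. This triangular
system has exactly one solution, the endemic point, which is positive once `R₀ > 1`. -/

namespace SEIAR

variable {K : Type*} [Field K] (N μ βI βA k γI γA q : K)

def IsEquilibrium (S E I A R : K) : Prop :=
  μ * N - βI * S * I - βA * S * A - μ * S = 0 ∧
  βI * S * I + βA * S * A - (k + μ) * E = 0 ∧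
  k * (1 - q) * E - (γI + μ) * I = 0 ∧
  k * q * E - (γA + μ) * A = 0 ∧
  γI * I + γA * A - μ * R = 0

def basicReproductionNumber : K :=
  βI * N * k * (1 - q) / ((k + μ) * (γI + μ)) + βA * N * k * q / ((k + μ) * (γA + μ))

def EndemicRelations (R₀ S E I A R : K) : Prop :=
  S * R₀ = N ∧
  (k + μ) * E = μ * (N - S) ∧
  (γI + μ) * I = k * (1 - q) * E ∧
  (γA + μ) * A = k * q * E ∧
  μ * R = γI * I + γA * A

variable {N μ βI βA k γI γA q}

theorem mul_infectionRate_eq {E I A : K} (hkμ : k + μ ≠ 0) (hγI : γI + μ ≠ 0)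
    (hγA : γA + μ ≠ 0) (hI : (γI + μ) * I = k * (1 - q) * E)
    (hA : (γA + μ) * A = k * q * E) :
    N * (βI * I + βA * A) = (k + μ) * basicReproductionNumber N μ βI βA k γI γA q * E := by
  rw [eq_div_of_mul_eq hγI ((mul_comm _ _).trans hI),
    eq_div_of_mul_eq hγA ((mul_comm _ _).trans hA), basicReproductionNumber]
  field_simp

theorem isEquilibrium_iff_endemicRelations {R₀ S E I A R : K} (hN : N ≠ 0)
    (hkμ : k + μ ≠ 0) (hγI : γI + μ ≠ 0) (hγA : γA + μ ≠ 0)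
    (hR₀ : R₀ = basicReproductionNumber N μ βI βA k γI γA q) (hE : E ≠ 0) :
    IsEquilibrium N μ βI βA k γI γA q S E I A R ↔
      EndemicRelations N μ k γI γA q R₀ S E I A R := by
  have hkμE : (k + μ) * E ≠ 0 := mul_ne_zero hkμ hE
  constructor
  · rintro ⟨hS, hEeq, hI, hA, hR⟩
    have hI' : (γI + μ) * I = k * (1 - q) * E := by linear_combination -hI
    have hA' : (γA + μ) * A = k * q * E := by linear_combination -hA
    have hrate := hR₀ ▸ mul_infectionRate_eq (N := N) (βI := βI) (βA := βA) hkμ hγI hγA hI' hA'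
    refine ⟨?_, by linear_combination -hS - hEeq, hI', hA', by linear_combination -hR⟩
    apply mul_left_cancel₀ hkμE
    linear_combination -S * hrate + N * hEeq
  · rintro ⟨hS, hEeq, hI, hA, hR⟩
    have hrate := hR₀ ▸ mul_infectionRate_eq (N := N) (βI := βI) (βA := βA) hkμ hγI hγA hI hA
    have hEeq' : βI * S * I + βA * S * A - (k + μ) * E = 0 := by
      apply mul_left_cancel₀ hN
      linear_combination S * hrate + (k + μ) * E * hS
    exact ⟨by linear_combination -hEeq' - hEeq, hEeq', by linear_combination -hI,
      by linear_combination -hA, by linear_combination -hR⟩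

theorem EndemicRelations.unique {R₀ S E I A R S' E' I' A' R' : K} (hR₀ : R₀ ≠ 0)
    (hkμ : k + μ ≠ 0) (hγI : γI + μ ≠ 0) (hγA : γA + μ ≠ 0) (hμ : μ ≠ 0)
    (h : EndemicRelations N μ k γI γA q R₀ S E I A R)
    (h' : EndemicRelations N μ k γI γA q R₀ S' E' I' A' R') :
    S = S' ∧ E = E' ∧ I = I' ∧ A = A' ∧ R = R' := by
  obtain ⟨hS, hE, hI, hA, hR⟩ := h
  obtain ⟨hS', hE', hI', hA', hR'⟩ := h'
  have eS : S = S' := mul_right_cancel₀ hR₀ (hS.trans hS'.symm)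
  have eE : E = E' := mul_left_cancel₀ hkμ (by rw [hE, hE', eS])
  have eI : I = I' := mul_left_cancel₀ hγI (by rw [hI, hI', eE])
  have eA : A = A' := mul_left_cancel₀ hγA (by rw [hA, hA', eE])
  exact ⟨eS, eE, eI, eA, mul_left_cancel₀ hμ (by rw [hR, hR', eI, eA])⟩

theorem endemicRelations_endemicPoint {R₀ : K} (hR₀ : R₀ ≠ 0) (hkμ : k + μ ≠ 0)
    (hγI : γI + μ ≠ 0) (hγA : γA + μ ≠ 0) :
    EndemicRelations N μ k γI γA q R₀ (N / R₀) (N * μ / (k + μ) * (1 - 1 / R₀))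
      (N * k * (1 - q) * μ / ((γI + μ) * (k + μ)) * (1 - 1 / R₀))
      (N * k * q * μ / ((γA + μ) * (k + μ)) * (1 - 1 / R₀))
      (N * k * (q * γA * μ + γI * (γA + μ - q * μ))
        / ((γI + μ) * (γA + μ) * (k + μ)) * (1 - 1 / R₀)) := by
  refine ⟨div_mul_cancel₀ N hR₀, ?_, ?_, ?_, ?_⟩
  all_goals field_simp
  ring

end SEIAR

open SEIAR in
theorem seiar_endemic_equilibrium_general
    (N μ βI βA k γI γA q : ℝ)
    (hN : 0 < N) (hμ : 0 < μ)
    (hk : 0 < k) (hγI : 0 < γI) (hγA : 0 < γA)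
    (hq0 : 0 ≤ q) (hq1 : q ≤ 1)
    (R₀ : ℝ)
    (hR₀ : R₀ = βI * N * k * (1 - q) / ((k + μ) * (γI + μ))
              + βA * N * k * q / ((k + μ) * (γA + μ)))
    (hR₀gt : 1 < R₀)
    (Sstar Estar Istar Astar Rstar : ℝ)
    (hSstar : Sstar = N / R₀)
    (hEstar : Estar = N * μ / (k + μ) * (1 - 1 / R₀))
    (hIstar : Istar = N * k * (1 - q) * μ / ((γI + μ) * (k + μ)) * (1 - 1 / R₀))
    (hAstar : Astar = N * k * q * μ / ((γA + μ) * (k + μ)) * (1 - 1 / R₀))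
    (hRstar : Rstar = N * k * (q * γA * μ + γI * (γA + μ - q * μ))
        / ((γI + μ) * (γA + μ) * (k + μ)) * (1 - 1 / R₀)) :
    (μ * N - βI * Sstar * Istar - βA * Sstar * Astar - μ * Sstar = 0 ∧
     βI * Sstar * Istar + βA * Sstar * Astar - (k + μ) * Estar = 0 ∧
     k * (1 - q) * Estar - (γI + μ) * Istar = 0 ∧
     k * q * Estar - (γA + μ) * Astar = 0 ∧
     γI * Istar + γA * Astar - μ * Rstar = 0) ∧
    (0 < Sstar ∧ 0 < Estar ∧ 0 < Rstar) ∧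
    (q < 1 → 0 < Istar) ∧
    (0 < q → 0 < Astar) ∧
    (∀ S E I A R : ℝ,
      μ * N - βI * S * I - βA * S * A - μ * S = 0 →
      βI * S * I + βA * S * A - (k + μ) * E = 0 →
      k * (1 - q) * E - (γI + μ) * I = 0 →
      k * q * E - (γA + μ) * A = 0 →
      γI * I + γA * A - μ * R = 0 →
      0 < E →
      S = Sstar ∧ E = Estar ∧ I = Istar ∧ A = Astar ∧ R = Rstar) := by
  subst hSstar hEstar hIstar hAstar hRstar
  have hR₀pos : 0 < R₀ := by linarith
  have hgap : 0 < 1 - 1 / R₀ := by rwa [sub_pos, div_lt_one hR₀pos]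
  have hEpos : 0 < N * μ / (k + μ) * (1 - 1 / R₀) := by positivity
  have hkμ : k + μ ≠ 0 := by positivity
  have hγIμ : γI + μ ≠ 0 := by positivity
  have hγAμ : γA + μ ≠ 0 := by positivity
  have hstar := endemicRelations_endemicPoint (N := N) (q := q) hR₀pos.ne' hkμ hγIμ hγAμ
  have hiff {S E I A R : ℝ} (hE : E ≠ 0) :=
    isEquilibrium_iff_endemicRelations (βI := βI) (βA := βA) (S := S) (I := I) (A := A) (R := R)
      hN.ne' hkμ hγIμ hγAμ hR₀ hE
  refine ⟨(hiff hEpos.ne').2 hstar, ⟨by positivity, hEpos, ?_⟩, fun hq => ?_,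
    fun hq => by positivity, fun S E I A R e₁ e₂ e₃ e₄ e₅ hE => ?_⟩
  · have : 0 < γA + μ - q * μ := by nlinarith
    positivity
  · have : 0 < 1 - q := sub_pos.2 hq
    positivity
  · exact ((hiff hE.ne').1 ⟨e₁, e₂, e₃, e₄, e₅⟩).unique hR₀pos.ne' hkμ hγIμ hγAμ hμ.ne' hstar

/-- If `R₀ > 1`, the endemic point `(S*, E*, I*, A*, R*)` is an equilibrium of the SEIAR
system, with `S*, E*, R*` positive, `I*` positive when `q < 1`, `A*` positive when `q > 0`;
moreover it is the unique equilibrium with `E > 0`. -/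
theorem seiar_endemic_equilibrium
    (N μ βI βA k γI γA q : ℝ)
    (hN : 0 < N) (hμ : 0 < μ) (hβI : 0 < βI) (hβA : 0 < βA)
    (hk : 0 < k) (hγI : 0 < γI) (hγA : 0 < γA)
    (hq0 : 0 ≤ q) (hq1 : q ≤ 1)
    (R₀ : ℝ)
    (hR₀ : R₀ = βI * N * k * (1 - q) / ((k + μ) * (γI + μ))
              + βA * N * k * q / ((k + μ) * (γA + μ)))
    (hR₀gt : 1 < R₀)
    (Sstar Estar Istar Astar Rstar : ℝ)
    (hSstar : Sstar = N / R₀)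
    (hEstar : Estar = N * μ / (k + μ) * (1 - 1 / R₀))
    (hIstar : Istar = N * k * (1 - q) * μ / ((γI + μ) * (k + μ)) * (1 - 1 / R₀))
    (hAstar : Astar = N * k * q * μ / ((γA + μ) * (k + μ)) * (1 - 1 / R₀))
    (hRstar : Rstar = N * k * (q * γA * μ + γI * (γA + μ - q * μ))
        / ((γI + μ) * (γA + μ) * (k + μ)) * (1 - 1 / R₀)) :
    (μ * N - βI * Sstar * Istar - βA * Sstar * Astar - μ * Sstar = 0 ∧
     βI * Sstar * Istar + βA * Sstar * Astar - (k + μ) * Estar = 0 ∧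
     k * (1 - q) * Estar - (γI + μ) * Istar = 0 ∧
     k * q * Estar - (γA + μ) * Astar = 0 ∧
     γI * Istar + γA * Astar - μ * Rstar = 0) ∧
    (0 < Sstar ∧ 0 < Estar ∧ 0 < Rstar) ∧
    (q < 1 → 0 < Istar) ∧
    (0 < q → 0 < Astar) ∧
    (∀ S E I A R : ℝ,
      μ * N - βI * S * I - βA * S * A - μ * S = 0 →
      βI * S * I + βA * S * A - (k + μ) * E = 0 →
      k * (1 - q) * E - (γI + μ) * I = 0 →
      k * q * E - (γA + μ) * A = 0 →
      γI * I + γA * A - μ * R = 0 →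
      0 < E →
      S = Sstar ∧ E = Estar ∧ I = Istar ∧ A = Astar ∧ R = Rstar) :=
  seiar_endemic_equilibrium_general N μ βI βA k γI γA q hN hμ hk hγI hγA hq0 hq1 R₀ hR₀ hR₀gt Sstar
    Estar Istar Astar Rstar hSstar hEstar hIstar hAstar hRstar
end

section
/- Let S, E, I, A : ℝ → ℝ be differentiable functions with S(t) > 0 for all t, satisfying the first four SEIAR equations S' = μN − β_I S I − β_A S A − μS, E' = β_I S I + β_A S A − (k+μ)E, I' = k(1−q)E − (γ_I+μ)I, A' = kqE − (γ_A+μ)A. Define V₁(t) = (S − N − N ln(S/N)) + E + (Nβ_I/(γ_I+μ)) I + (Nβ_A/(γ_A+μ)) A. Then for all t, V₁'(t) = −μN(S/N + N/S − 2) + (k+μ)(R₀ − 1)E. In particular, if R₀ ≤ 1 and E(t) ≥ 0 for all t, then V₁'(t) ≤ 0 for all t. -/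
/-! The derivative of `V₁` along solutions is computed term by term: the logarithmic part
turns `S'` into `(1 - N/S) S'`, which cancels the incidence terms `β S I`, `β S A` against
those of `E'`, while the weights `Nβ/(γ+μ)` of `I` and `A` cancel the terms `Nβ I`, `Nβ A`
and leave `(k+μ)R₀ E`. The remainder `μ(N - S)(1 - N/S) = -μ(S - N)²/S` is nonpositive,
and so is `(k+μ)(R₀ - 1)E` when `R₀ ≤ 1` and `E ≥ 0`. -/

theorem two_le_div_add_div {K : Type*} [Field K] [LinearOrder K] [IsStrictOrderedRing K]
    {a b : K} (ha : 0 < a) (hb : 0 < b) : 2 ≤ a / b + b / a := by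
  have key : a / b + b / a - 2 = (a - b) ^ 2 / (a * b) := by
    field_simp
    ring
  have : 0 ≤ (a - b) ^ 2 / (a * b) := by positivity
  linarith

theorem HasDerivAt.sub_sub_mul_log_div {f : ℝ → ℝ} {f' c t : ℝ} (hf : HasDerivAt f f' t)
    (hc : c ≠ 0) (hft : f t ≠ 0) :
    HasDerivAt (fun u => f u - c - c * Real.log (f u / c)) ((1 - c / f t) * f') t := by
  have hlog := (hf.div_const c).log (div_ne_zero hft hc)
  refine ((hf.sub_const c).sub (hlog.const_mul c)).congr_deriv ?_
  field_simp

theorem seiar_lyapunov_dfe_general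
    (N μ βI βA k γI γA q : ℝ)
    (hN : 0 < N) (hμ : 0 < μ)
    (hk : 0 < k) (hγI : 0 < γI) (hγA : 0 < γA)
    (R₀ : ℝ)
    (hR₀ : R₀ = βI * N * k * (1 - q) / ((k + μ) * (γI + μ))
              + βA * N * k * q / ((k + μ) * (γA + μ)))
    (S E I A : ℝ → ℝ)
    (hSpos : ∀ t : ℝ, 0 < S t)
    (hS : ∀ t : ℝ, HasDerivAt S (μ * N - βI * S t * I t - βA * S t * A t - μ * S t) t)
    (hE : ∀ t : ℝ, HasDerivAt E (βI * S t * I t + βA * S t * A t - (k + μ) * E t) t)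
    (hI : ∀ t : ℝ, HasDerivAt I (k * (1 - q) * E t - (γI + μ) * I t) t)
    (hA : ∀ t : ℝ, HasDerivAt A (k * q * E t - (γA + μ) * A t) t)
    (V₁ : ℝ → ℝ)
    (hV₁ : V₁ = fun t => (S t - N - N * Real.log (S t / N)) + E t
        + N * βI / (γI + μ) * I t + N * βA / (γA + μ) * A t) :
    (∀ t : ℝ, HasDerivAt V₁
      (-(μ * N) * (S t / N + N / S t - 2) + (k + μ) * (R₀ - 1) * E t) t) ∧
    (R₀ ≤ 1 → (∀ t : ℝ, 0 ≤ E t) → ∀ t : ℝ, deriv V₁ t ≤ 0) := by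
  have hV₁' : ∀ t, HasDerivAt V₁
      (-(μ * N) * (S t / N + N / S t - 2) + (k + μ) * (R₀ - 1) * E t) t := by
    intro t
    have hD := ((((hS t).sub_sub_mul_log_div hN.ne' (hSpos t).ne').add (hE t)).add
      ((hI t).const_mul (N * βI / (γI + μ)))).add ((hA t).const_mul (N * βA / (γA + μ)))
    rw [hV₁]
    refine hD.congr_deriv ?_
    have : k + μ ≠ 0 := by positivity
    have : γI + μ ≠ 0 := by positivity
    have : γA + μ ≠ 0 := by positivity
    have : S t ≠ 0 := (hSpos t).ne'
    rw [hR₀]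
    field_simp
    ring
  refine ⟨hV₁', fun hR hE₀ t => ?_⟩
  rw [(hV₁' t).deriv]
  have hS_term : 0 ≤ μ * N * (S t / N + N / S t - 2) :=
    mul_nonneg (by positivity) (sub_nonneg.mpr (two_le_div_add_div (hSpos t) hN))
  have hE_term : (k + μ) * (R₀ - 1) * E t ≤ 0 :=
    mul_nonpos_of_nonpos_of_nonneg
      (mul_nonpos_of_nonneg_of_nonpos (by positivity) (by linarith)) (hE₀ t)
  linarith

/-- The Lyapunov function `V₁` for the disease-free steady state of the SEIAR model has
derivative `V₁' = -μN(S/N + N/S - 2) + (k+μ)(R₀ - 1)E` along solutions; in particular,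
if `R₀ ≤ 1` and `E ≥ 0`, then `V₁' ≤ 0`. -/
theorem seiar_lyapunov_dfe
    (N μ βI βA k γI γA q : ℝ)
    (hN : 0 < N) (hμ : 0 < μ) (hβI : 0 < βI) (hβA : 0 < βA)
    (hk : 0 < k) (hγI : 0 < γI) (hγA : 0 < γA)
    (hq0 : 0 ≤ q) (hq1 : q ≤ 1)
    (R₀ : ℝ)
    (hR₀ : R₀ = βI * N * k * (1 - q) / ((k + μ) * (γI + μ))
              + βA * N * k * q / ((k + μ) * (γA + μ)))
    (S E I A : ℝ → ℝ)
    (hSpos : ∀ t : ℝ, 0 < S t)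
    (hS : ∀ t : ℝ, HasDerivAt S (μ * N - βI * S t * I t - βA * S t * A t - μ * S t) t)
    (hE : ∀ t : ℝ, HasDerivAt E (βI * S t * I t + βA * S t * A t - (k + μ) * E t) t)
    (hI : ∀ t : ℝ, HasDerivAt I (k * (1 - q) * E t - (γI + μ) * I t) t)
    (hA : ∀ t : ℝ, HasDerivAt A (k * q * E t - (γA + μ) * A t) t)
    (V₁ : ℝ → ℝ)
    (hV₁ : V₁ = fun t => (S t - N - N * Real.log (S t / N)) + E t
        + N * βI / (γI + μ) * I t + N * βA / (γA + μ) * A t) :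
    (∀ t : ℝ, HasDerivAt V₁
      (-(μ * N) * (S t / N + N / S t - 2) + (k + μ) * (R₀ - 1) * E t) t) ∧
    (R₀ ≤ 1 → (∀ t : ℝ, 0 ≤ E t) → ∀ t : ℝ, deriv V₁ t ≤ 0) :=
  seiar_lyapunov_dfe_general N μ βI βA k γI γA q hN hμ hk hγI hγA R₀ hR₀ S E I A hSpos hS hE hI hA
    V₁ hV₁
end

section
/- The point ((1−p)N, pN, 0, 0, 0, 0) is an equilibrium of the SVEIAR system, and the basic reproductive ratio obtained from the next-generation matrix of the SVEIAR system at this disease-free steady state equals R₀^V = (1−εp)·R₀; that is, the matrix K^V = −T^V (Σ)⁻¹, where T^V has first row (0, β_I(1−εp)N, β_A(1−εp)N) and all other entries zero and Σ has rows (−(k+μ), 0, 0), (k(1−q), −(γ_I+μ), 0), (kq, 0, −(γ_A+μ)), has eigenvalues 0 (multiplicity 2) and (1−εp)(β_I N k(1−q)/((k+μ)(γ_I+μ)) + β_A N k q/((k+μ)(γ_A+μ))). -/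
open Matrix Polynomial

/-! At the disease-free point every infected compartment is zero, so each right-hand side vanishes
identically. Since only the first row of `T^V` is nonzero, the same holds for `K^V = -T^V Σ⁻¹`,
and such a matrix has characteristic polynomial `X² (X - K₁₁)`. Inverting the lower-triangular `Σ`
gives `K₁₁ = (1 - εp) R₀`. -/

theorem charpoly_fin_three_of_first_row {R : Type*} [CommRing R] (a b c : R) :
    (!![a, b, c; 0, 0, 0; 0, 0, 0] : Matrix (Fin 3) (Fin 3) R).charpoly = X ^ 2 * (X - C a) := by
  rw [Matrix.charpoly, Matrix.det_fin_three]
  simp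
  ring

theorem inv_lowerTriangular_fin_three {K : Type*} [Field K] {a b c : K}
    (ha : a ≠ 0) (hb : b ≠ 0) (hc : c ≠ 0) (u v : K) :
    (!![-a, 0, 0; u, -b, 0; v, 0, -c] : Matrix (Fin 3) (Fin 3) K)⁻¹ =
      !![-a⁻¹, 0, 0; -(u / (a * b)), -b⁻¹, 0; -(v / (a * c)), 0, -c⁻¹] := by
  refine inv_eq_right_inv ?_
  ext i j
  fin_cases i <;> fin_cases j <;> simp [Matrix.mul_apply, Fin.sum_univ_three] <;> field_simp <;> ring

theorem neg_firstRow_mul_inv_lowerTriangular {K : Type*} [Field K] {a b c : K}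
    (ha : a ≠ 0) (hb : b ≠ 0) (hc : c ≠ 0) (u v x y : K) :
    -(!![0, x, y; 0, 0, 0; 0, 0, 0] * (!![-a, 0, 0; u, -b, 0; v, 0, -c])⁻¹) =
      !![x * u / (a * b) + y * v / (a * c), x / b, y / c; 0, 0, 0; 0, 0, 0] := by
  rw [inv_lowerTriangular_fin_three ha hb hc]
  ext i j
  fin_cases i <;> fin_cases j <;> simp <;> ring

theorem sveiar_dfe_and_R0V_general
    (N μ βI βA k γI γA q p ε : ℝ)
    (hμ : 0 < μ)
    (hk : 0 < k) (hγI : 0 < γI) (hγA : 0 < γA)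
    (R₀ R₀V : ℝ)
    (hR₀ : R₀ = βI * N * k * (1 - q) / ((k + μ) * (γI + μ))
              + βA * N * k * q / ((k + μ) * (γA + μ)))
    (hR₀V : R₀V = (1 - ε * p) * R₀)
    (TV Sig KV : Matrix (Fin 3) (Fin 3) ℝ)
    (hTV : TV = !![0, βI * (1 - ε * p) * N, βA * (1 - ε * p) * N; 0, 0, 0; 0, 0, 0])
    (hSig : Sig = !![-(k + μ), 0, 0;
                     k * (1 - q), -(γI + μ), 0;
                     k * q, 0, -(γA + μ)])
    (hKV : KV = -(TV * Sig⁻¹)) :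
    ((1 - p) * μ * N - βI * ((1 - p) * N) * 0 - βA * ((1 - p) * N) * 0
        - μ * ((1 - p) * N) = 0 ∧
     p * μ * N - (1 - ε) * (βI * (p * N) * 0 + βA * (p * N) * 0) - μ * (p * N) = 0 ∧
     ((1 - p) * N + (1 - ε) * (p * N)) * (βI * 0 + βA * 0) - (k + μ) * 0 = 0 ∧
     k * (1 - q) * 0 - (γI + μ) * 0 = 0 ∧
     k * q * 0 - (γA + μ) * 0 = 0 ∧
     γI * 0 + γA * 0 - μ * 0 = 0) ∧
    KV.charpoly = X ^ 2 * (X - C R₀V) := by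
  refine ⟨⟨by ring, by ring, by ring, by ring, by ring, by ring⟩, ?_⟩
  rw [hKV, hTV, hSig, neg_firstRow_mul_inv_lowerTriangular (by positivity) (by positivity)
    (by positivity), charpoly_fin_three_of_first_row, hR₀V, hR₀]
  congr 3
  ring

/-- The point `((1-p)N, pN, 0, 0, 0, 0)` is an equilibrium of the SVEIAR system, and the
next-generation matrix `K^V = -T^V Σ⁻¹` at this disease-free steady state has eigenvalues
`0` (with algebraic multiplicity 2) and `R₀^V = (1 - εp) R₀`. -/
theorem sveiar_dfe_and_R0V
    (N μ βI βA k γI γA q p ε : ℝ)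
    (hN : 0 < N) (hμ : 0 < μ) (hβI : 0 < βI) (hβA : 0 < βA)
    (hk : 0 < k) (hγI : 0 < γI) (hγA : 0 < γA)
    (hq0 : 0 ≤ q) (hq1 : q ≤ 1) (hp0 : 0 ≤ p) (hp1 : p ≤ 1)
    (hε0 : 0 ≤ ε) (hε1 : ε < 1)
    (R₀ R₀V : ℝ)
    (hR₀ : R₀ = βI * N * k * (1 - q) / ((k + μ) * (γI + μ))
              + βA * N * k * q / ((k + μ) * (γA + μ)))
    (hR₀V : R₀V = (1 - ε * p) * R₀)
    (TV Sig KV : Matrix (Fin 3) (Fin 3) ℝ)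
    (hTV : TV = !![0, βI * (1 - ε * p) * N, βA * (1 - ε * p) * N; 0, 0, 0; 0, 0, 0])
    (hSig : Sig = !![-(k + μ), 0, 0;
                     k * (1 - q), -(γI + μ), 0;
                     k * q, 0, -(γA + μ)])
    (hKV : KV = -(TV * Sig⁻¹)) :
    ((1 - p) * μ * N - βI * ((1 - p) * N) * 0 - βA * ((1 - p) * N) * 0
        - μ * ((1 - p) * N) = 0 ∧
     p * μ * N - (1 - ε) * (βI * (p * N) * 0 + βA * (p * N) * 0) - μ * (p * N) = 0 ∧
     ((1 - p) * N + (1 - ε) * (p * N)) * (βI * 0 + βA * 0) - (k + μ) * 0 = 0 ∧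
     k * (1 - q) * 0 - (γI + μ) * 0 = 0 ∧
     k * q * 0 - (γA + μ) * 0 = 0 ∧
     γI * 0 + γA * 0 - μ * 0 = 0) ∧
    KV.charpoly = X ^ 2 * (X - C R₀V) :=
  sveiar_dfe_and_R0V_general N μ βI βA k γI γA q p ε hμ hk hγI hγA R₀ R₀V hR₀ hR₀V TV Sig KV hTV
    hSig hKV
end

section
/- For the quartic characteristic polynomial λ⁴ + α₃λ³ + α₂λ² + α₁λ + α₀ of the Jacobian of the SEIAR system at the endemic steady state, where α₃ = γ_I + γ_A + k + 3μ + μR₀ and α₀ = μR₀(k+μ)(γ_I+μ)(γ_A+μ) − μ(N/R₀)k(β_I(1−q)(γ_A+μ) + β_A q(γ_I+μ)), one has α₃ > 0 always, and α₀ > 0 if and only if R₀ > 1. -/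
/-!
Clearing the denominators in `R₀` gives
`R₀ (k+μ)(γI+μ)(γA+μ) = N k (βI (1-q)(γA+μ) + βA q (γI+μ))`, so the subtracted term of `α₀`
is `μ (k+μ)(γI+μ)(γA+μ)` and `α₀ = μ (k+μ)(γI+μ)(γA+μ) (R₀ - 1)` has the sign of `R₀ - 1`.
-/

section SEIAR

variable {N μ βI βA k γI γA q : ℝ}

theorem seiar_R₀_mul_denom (hk : k + μ ≠ 0) (hγI : γI + μ ≠ 0) (hγA : γA + μ ≠ 0) :
    (βI * N * k * (1 - q) / ((k + μ) * (γI + μ)) + βA * N * k * q / ((k + μ) * (γA + μ)))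
        * ((k + μ) * (γI + μ) * (γA + μ))
      = N * k * (βI * (1 - q) * (γA + μ) + βA * q * (γI + μ)) := by
  field_simp

theorem seiar_α₀_eq_mul_sub_one {R₀ : ℝ} (hk : k + μ ≠ 0) (hγI : γI + μ ≠ 0)
    (hγA : γA + μ ≠ 0)
    (hR₀ : R₀ = βI * N * k * (1 - q) / ((k + μ) * (γI + μ))
              + βA * N * k * q / ((k + μ) * (γA + μ)))
    (hR₀ne : R₀ ≠ 0) :
    μ * R₀ * (k + μ) * (γI + μ) * (γA + μ)
        - μ * (N / R₀) * k * (βI * (1 - q) * (γA + μ) + βA * q * (γI + μ))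
      = μ * ((k + μ) * (γI + μ) * (γA + μ)) * (R₀ - 1) := by
  have hkey := seiar_R₀_mul_denom (N := N) (βI := βI) (βA := βA) (q := q) hk hγI hγA
  rw [← hR₀] at hkey
  field_simp
  linear_combination μ * hkey

end SEIAR

theorem seiar_quartic_coefficients_general
    (N μ βI βA k γI γA q R₀ α₃ α₀ : ℝ)
    (hμ : 0 < μ)
    (hk : 0 < k) (hγI : 0 < γI) (hγA : 0 < γA)
    (hR₀ : R₀ = βI * N * k * (1 - q) / ((k + μ) * (γI + μ))
              + βA * N * k * q / ((k + μ) * (γA + μ)))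
    (hR₀pos : 0 < R₀)
    (hα₃ : α₃ = γI + γA + k + 3 * μ + μ * R₀)
    (hα₀ : α₀ = μ * R₀ * (k + μ) * (γI + μ) * (γA + μ)
        - μ * (N / R₀) * k * (βI * (1 - q) * (γA + μ) + βA * q * (γI + μ))) :
    0 < α₃ ∧ (0 < α₀ ↔ 1 < R₀) := by
  have hD : 0 < μ * ((k + μ) * (γI + μ) * (γA + μ)) := by positivity
  refine ⟨by rw [hα₃]; positivity, ?_⟩
  rw [hα₀, seiar_α₀_eq_mul_sub_one (by positivity) (by positivity) (by positivity) hR₀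
    hR₀pos.ne', mul_pos_iff_of_pos_left hD, sub_pos]

/-- For the quartic characteristic polynomial of the Jacobian at the endemic steady state
of the SEIAR model, the coefficient `α₃` is always positive and the constant term `α₀` is
positive if and only if `R₀ > 1`. -/
theorem seiar_quartic_coefficients
    (N μ βI βA k γI γA q R₀ α₃ α₀ : ℝ)
    (hN : 0 < N) (hμ : 0 < μ) (hβI : 0 < βI) (hβA : 0 < βA)
    (hk : 0 < k) (hγI : 0 < γI) (hγA : 0 < γA)
    (hq0 : 0 ≤ q) (hq1 : q ≤ 1)
    (hR₀ : R₀ = βI * N * k * (1 - q) / ((k + μ) * (γI + μ))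
              + βA * N * k * q / ((k + μ) * (γA + μ)))
    (hR₀pos : 0 < R₀)
    (hα₃ : α₃ = γI + γA + k + 3 * μ + μ * R₀)
    (hα₀ : α₀ = μ * R₀ * (k + μ) * (γI + μ) * (γA + μ)
        - μ * (N / R₀) * k * (βI * (1 - q) * (γA + μ) + βA * q * (γI + μ))) :
    0 < α₃ ∧ (0 < α₀ ↔ 1 < R₀) :=
  seiar_quartic_coefficients_general N μ βI βA k γI γA q R₀ α₃ α₀ hμ hk hγI hγA hR₀ hR₀pos hα₃ hα₀
end
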